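/- arXiv:2103.09368 — 4 statements merged into one kernel-verified Lean document; each statement's English description precedes it below -/
import Mathlib

section
/- Let P be a polynomial in m ≥ 2 real variables of total degree at most n that is invariant under every orthogonal transformation of ℝ^m fixing the point x₀ = (1, 0, ..., 0). Then there exists a polynomial P₂ in two variables of total degree at most n, even in its second variable, such that P(x) = P₂(x₁, (x₂² + ... + x_m²)^{1/2}) for all x ∈ ℝ^m. -/
open MvPolynomial

theorem stmt7 (m n : ℕ) (hm : 2 ≤ m) (P : MvPolynomial (Fin m) ℝ)
    (hdeg : P.totalDegree ≤ n)
    (hinv : ∀ A : Matrix (Fin m) (Fin m) ℝ, A ∈ Matrix.orthogonalGroup (Fin m) ℝ →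
      A.mulVec (fun i => if i = (⟨0, by omega⟩ : Fin m) then (1:ℝ) else 0) =
        (fun i => if i = (⟨0, by omega⟩ : Fin m) then (1:ℝ) else 0) →
      ∀ x : Fin m → ℝ, MvPolynomial.eval (A.mulVec x) P = MvPolynomial.eval x P) :
    ∃ P₂ : MvPolynomial (Fin 2) ℝ, P₂.totalDegree ≤ n ∧
      (∀ u v : ℝ, MvPolynomial.eval ![u, -v] P₂ = MvPolynomial.eval ![u, v] P₂) ∧
      ∀ x : Fin m → ℝ,
        MvPolynomial.eval x P =
          MvPolynomial.eval ![x ⟨0, by omega⟩,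
            Real.sqrt (∑ j ∈ Finset.univ.erase (⟨0, by omega⟩ : Fin m), x j ^ 2)] P₂ := by
  classical
  have h0m : 0 < m := by omega
  have h1m : 1 < m := by omega
  set e0 : Fin m := ⟨0, by omega⟩ with he0
  set e1 : Fin m := ⟨1, by omega⟩ with he1
  have he01 : e1 ≠ e0 := by simp [he0, he1, Fin.ext_iff]
  -- Key lemma: P takes the same value on points with the same first coordinate and norm.
  have key : ∀ x y : Fin m → ℝ, x e0 = y e0 → (∑ i, x i ^ 2) = (∑ i, y i ^ 2) →
      MvPolynomial.eval x P = MvPolynomial.eval y P := by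
    intro x y h0 hs
    set x' : EuclideanSpace ℝ (Fin m) := WithLp.toLp 2 x with hx'
    set y' : EuclideanSpace ℝ (Fin m) := WithLp.toLp 2 y with hy'
    have hn : ‖y'‖ = ‖x'‖ := by
      rw [EuclideanSpace.norm_eq, EuclideanSpace.norm_eq]
      congr 1
      simpa [sq_abs, hx', hy'] using hs.symm
    set f : EuclideanSpace ℝ (Fin m) ≃ₗᵢ[ℝ] EuclideanSpace ℝ (Fin m) :=
      Submodule.reflection (ℝ ∙ (y' - x'))ᗮ with hf
    have hfy : f y' = x' := Submodule.reflection_sub hn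
    set e : EuclideanSpace ℝ (Fin m) := WithLp.toLp 2 (fun i => if i = e0 then (1:ℝ) else 0) with he
    have hfe : f e = e := by
      apply Submodule.reflection_mem_subspace_eq_self
      rw [Submodule.mem_orthogonal_singleton_iff_inner_right]
      have h0' : x e0 = y e0 := h0
      have : (inner ℝ (y' - x') e : ℝ) = ∑ i, (y i - x i) * (if i = e0 then (1:ℝ) else 0) := by
        simp [PiLp.inner_apply, RCLike.inner_apply, he, hx', hy']
      rw [this, Finset.sum_eq_single e0]
      · rw [if_pos rfl, h0']; ring
      · intro b _ hb; rw [if_neg hb]; ring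
      · intro hb; exact absurd (Finset.mem_univ e0) hb
    -- Build the matrix of f.
    set L : (Fin m → ℝ) →ₗ[ℝ] (Fin m → ℝ) :=
      (WithLp.linearEquiv 2 ℝ (Fin m → ℝ)).toLinearMap ∘ₗ f.toLinearIsometry.toLinearMap ∘ₗ
        (WithLp.linearEquiv 2 ℝ (Fin m → ℝ)).symm.toLinearMap with hL
    have hLapp : ∀ v : Fin m → ℝ, L v = (f (WithLp.toLp 2 v)).ofLp := fun v => rfl
    set A : Matrix (Fin m) (Fin m) ℝ := LinearMap.toMatrix' L with hA
    have hAv : ∀ v : Fin m → ℝ, A.mulVec v = (f (WithLp.toLp 2 v)).ofLp := by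
      intro v
      rw [← Matrix.toLin'_apply, hA, Matrix.toLin'_toMatrix']
      exact hLapp v
    have hinner : ∀ v w : EuclideanSpace ℝ (Fin m),
        (∑ k, f v k * f w k) = ∑ k, v k * w k := by
      intro v w
      have h := f.inner_map_map v w
      have l1 : (inner ℝ (f v) (f w) : ℝ) = ∑ k, f v k * f w k := by
        rw [PiLp.inner_apply]; simp [RCLike.inner_apply, mul_comm]
      have l2 : (inner ℝ v w : ℝ) = ∑ k, v k * w k := by
        rw [PiLp.inner_apply]; simp [RCLike.inner_apply, mul_comm]
      rw [← l1, ← l2, h]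
    have hAorth : A ∈ Matrix.orthogonalGroup (Fin m) ℝ := by
      rw [Matrix.mem_orthogonalGroup_iff']
      ext i j
      have hAe : ∀ k l, A k l = f (WithLp.toLp 2 (fun j' => if j' = l then (1:ℝ) else 0)) k := by
        intro k l
        rw [hA, LinearMap.toMatrix'_apply, hLapp]
        have hps : (Pi.single l (1:ℝ) : Fin m → ℝ) = fun j' => if j' = l then 1 else 0 := by
          funext j'; exact Pi.single_apply _ _ _
        rw [hps]
      rw [Matrix.mul_apply]
      show (∑ k, A k i * A k j) = _
      calc (∑ k, A k i * A k j)
          = ∑ k, f (WithLp.toLp 2 (fun j' => if j' = i then (1:ℝ) else 0)) k *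
              f (WithLp.toLp 2 (fun j' => if j' = j then (1:ℝ) else 0)) k := by
            simp only [hAe]
        _ = ∑ k, (if k = i then (1:ℝ) else 0) * (if k = j then (1:ℝ) else 0) := hinner _ _
        _ = (1 : Matrix (Fin m) (Fin m) ℝ) i j := by
            rw [Finset.sum_eq_single i]
            · simp [Matrix.one_apply, eq_comm]
            · intro b _ hb; simp [hb]
            · simp
    have hAe0 : A.mulVec (fun i => if i = e0 then (1:ℝ) else 0) =
        (fun i => if i = e0 then (1:ℝ) else 0) := by
      rw [hAv]
      exact congrArg WithLp.ofLp hfe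
    have := hinv A hAorth hAe0 y
    rw [hAv y] at this
    rw [← this]
    exact congrArg (fun z : EuclideanSpace ℝ (Fin m) => MvPolynomial.eval z.ofLp P) hfy.symm
  -- Define P₂
  set g2 : Fin m → MvPolynomial (Fin 2) ℝ :=
    fun i => if i = e0 then X 0 else if i = e1 then X 1 else 0 with hg2
  set P₂ : MvPolynomial (Fin 2) ℝ := eval₂ C g2 P with hP₂
  have hg2deg : ∀ i, (g2 i).totalDegree ≤ 1 := by
    intro i
    simp only [hg2]
    split_ifs <;> simp [totalDegree_X]
  have hdP₂ : P₂.totalDegree ≤ P.totalDegree := by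
    rw [hP₂, eval₂_eq]
    apply (totalDegree_finset_sum _ _).trans
    apply Finset.sup_le
    intro d hd
    calc (C (coeff d P) * ∏ i ∈ d.support, g2 i ^ d i).totalDegree
        ≤ (C (coeff d P)).totalDegree + (∏ i ∈ d.support, g2 i ^ d i).totalDegree :=
          totalDegree_mul _ _
      _ ≤ 0 + ∑ i ∈ d.support, (g2 i ^ d i).totalDegree := by
          gcongr
          · exact le_of_eq (totalDegree_C _)
          · exact totalDegree_finset_prod _ _
      _ ≤ ∑ i ∈ d.support, d i := by
          rw [zero_add]
          apply Finset.sum_le_sum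
          intro i _
          calc (g2 i ^ d i).totalDegree ≤ d i * (g2 i).totalDegree := totalDegree_pow _ _
            _ ≤ d i * 1 := by exact Nat.mul_le_mul_left _ (hg2deg i)
            _ = d i := Nat.mul_one _
      _ ≤ P.totalDegree := le_totalDegree hd
  have hev : ∀ z : Fin 2 → ℝ, MvPolynomial.eval z P₂ =
      MvPolynomial.eval (fun i => if i = e0 then z 0 else if i = e1 then z 1 else 0) P := by
    intro z
    rw [hP₂, eval_eval₂]
    have hC : (MvPolynomial.eval z).comp (C : ℝ →+* MvPolynomial (Fin 2) ℝ) = RingHom.id ℝ := by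
      ext r; simp
    rw [hC, eval₂_id]
    have harg : (fun s => MvPolynomial.eval z (g2 s)) =
        (fun i => if i = e0 then z 0 else if i = e1 then z 1 else 0) := by
      funext i
      simp only [hg2]
      split_ifs <;> simp
    rw [harg]
  have hsum : ∀ a b : ℝ, (∑ i, (if i = e0 then a else if i = e1 then b else 0) ^ 2)
      = a ^ 2 + b ^ 2 := by
    intro a b
    rw [← Finset.sum_erase_add _ _ (Finset.mem_univ e0)]
    have he1mem : e1 ∈ Finset.univ.erase e0 := Finset.mem_erase.mpr ⟨he01, Finset.mem_univ e1⟩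
    rw [← Finset.sum_erase_add _ _ he1mem]
    have hz : (∑ i ∈ (Finset.univ.erase e0).erase e1,
        (if i = e0 then a else if i = e1 then b else 0) ^ 2) = 0 := by
      apply Finset.sum_eq_zero
      intro i hi
      have h1 : i ≠ e1 := (Finset.mem_erase.mp hi).1
      have h0' : i ≠ e0 := (Finset.mem_erase.mp (Finset.mem_erase.mp hi).2).1
      simp [h0', h1]
    rw [hz]
    simp [he01]
    ring
  refine ⟨P₂, hdP₂.trans hdeg, ?_, ?_⟩
  · intro u v
    rw [hev, hev]
    apply key
    · simp [he01]
    · rw [Matrix.cons_val_zero, Matrix.cons_val_zero, Matrix.cons_val_one, Matrix.cons_val_one,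
        Matrix.cons_val_zero, Matrix.cons_val_zero, hsum, hsum]
      ring
  · intro x
    rw [hev]
    apply key
    · simp
    · rw [Matrix.cons_val_zero, Matrix.cons_val_one, Matrix.cons_val_zero, hsum]
      have hS : (0:ℝ) ≤ ∑ j ∈ Finset.univ.erase e0, x j ^ 2 :=
        Finset.sum_nonneg fun j _ => sq_nonneg _
      rw [Real.sq_sqrt hS]
      rw [← Finset.sum_erase_add _ _ (Finset.mem_univ e0)]
      ring
end

section
/- Let V ⊂ ℝ^m be a centrally symmetric closed convex body satisfying the Π-condition (i.e., for every t ∈ V, all points (±|t₁|, ..., ±|t_m|) belong to V), and let a ≥ 0. Then the set of polynomials { P(t) = R(1 - 2t₁², ..., 1 - 2t_m²) : R ∈ 𝒫_{aV} } equals 𝒫_{2aV,e}, the set of polynomials with Newton polyhedron contained in 2aV that are even in each variable. -/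
open Pointwise MvPolynomial


/-- Single coordinate update stays in a convex Π-set. -/
lemma upd_mem {m : ℕ} {W : Set (Fin m → ℝ)} (hconv : Convex ℝ W)
    (hPi : ∀ t ∈ W, ∀ ε : Fin m → ℝ, (∀ i, ε i = 1 ∨ ε i = -1) →
      (fun i => ε i * |t i|) ∈ W)
    {t : Fin m → ℝ} (ht : t ∈ W) (i : Fin m) {c : ℝ} (hc : |c| ≤ |t i|) :
    Function.update t i c ∈ W := by
  classical
  by_cases h0 : t i = 0
  · have : c = 0 := by rw [h0] at hc; simpa using abs_nonpos_iff.mp (by simpa using hc)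
    have : Function.update t i c = t := by
      rw [this, ← h0]; exact Function.update_eq_self i t
    rwa [this]
  · set ε₁ : Fin m → ℝ := fun j => if 0 ≤ t j then 1 else -1 with hε₁
    have hsign : ∀ j, ε₁ j * |t j| = t j := by
      intro j; by_cases h : 0 ≤ t j
      · simp [hε₁, h, abs_of_nonneg h]
      · simp [hε₁, h, abs_of_neg (lt_of_not_ge h)]
    have hv₁ : Function.update t i |t i| ∈ W := by
      have := hPi t ht (Function.update ε₁ i 1) (by
        intro j
        by_cases h : j = i
        · subst h; simp
        · simp [Function.update_of_ne h]
          by_cases h2 : 0 ≤ t j <;> simp [hε₁, h2])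
      convert this using 1
      funext j
      by_cases h : j = i
      · subst h; simp
      · simp [Function.update_of_ne h, hsign j]
    have hv₂ : Function.update t i (-|t i|) ∈ W := by
      have := hPi t ht (Function.update ε₁ i (-1)) (by
        intro j
        by_cases h : j = i
        · subst h; simp
        · simp [Function.update_of_ne h]
          by_cases h2 : 0 ≤ t j <;> simp [hε₁, h2])
      convert this using 1
      funext j
      by_cases h : j = i
      · subst h; simp
      · simp [Function.update_of_ne h, hsign j]
    have hti : (0:ℝ) < |t i| := abs_pos.mpr h0
    set θ : ℝ := (c + |t i|) / (2 * |t i|) with hθ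
    have hθ0 : 0 ≤ θ := by
      apply div_nonneg _ (by linarith)
      have := neg_abs_le c
      have := abs_le.mp hc
      linarith [this.1]
    have hθ1 : θ ≤ 1 := by
      rw [hθ, div_le_one (by linarith)]
      have := (abs_le.mp hc).2
      linarith
    have := hconv hv₁ hv₂ hθ0 (by linarith : (0:ℝ) ≤ 1 - θ) (by ring)
    convert this using 1
    funext j
    by_cases h : j = i
    · subst h
      simp only [Pi.add_apply, Pi.smul_apply, Function.update_self, smul_eq_mul]
      field_simp [hθ]
      rw [hθ]
      field_simp
      ring
    · simp only [Pi.add_apply, Pi.smul_apply, Function.update_of_ne h, smul_eq_mul]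
      ring

/-- Box lemma: coordinatewise domination. -/
lemma box_mem {m : ℕ} {W : Set (Fin m → ℝ)} (hconv : Convex ℝ W)
    (hPi : ∀ t ∈ W, ∀ ε : Fin m → ℝ, (∀ i, ε i = 1 ∨ ε i = -1) →
      (fun i => ε i * |t i|) ∈ W)
    {t s : Fin m → ℝ} (ht : t ∈ W) (hs : ∀ i, |s i| ≤ |t i|) : s ∈ W := by
  classical
  have key : ∀ A : Finset (Fin m), (fun i => if i ∈ A then s i else t i) ∈ W := by
    intro A
    induction A using Finset.induction with
    | empty => simpa using ht
    | @insert a A hnotmem ih =>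
      have := upd_mem hconv hPi ih a (c := s a) (by
        simp only [if_neg hnotmem]
        exact hs a)
      convert this using 1
      funext j
      by_cases h : j = a
      · subst h; simp [hnotmem]
      · rw [Function.update_of_ne h]
        simp only [Finset.mem_insert, h, false_or]
  have := key Finset.univ
  simpa using this

/-- Monotonicity: if the ℝ-cast of `k` lies in `b • V` and `j ≤ k` coordinatewise,
then the cast of `j` lies in `b • V`. -/
lemma mem_smul_of_le {m : ℕ} {V : Set (Fin m → ℝ)}
    (hconv : Convex ℝ V)
    (hPi : ∀ t ∈ V, ∀ ε : Fin m → ℝ, (∀ i, ε i = 1 ∨ ε i = -1) →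
      (fun i => ε i * |t i|) ∈ V)
    {b : ℝ} (hb : 0 ≤ b) {j k : Fin m → ℕ} (hjk : ∀ i, j i ≤ k i)
    (hk : (fun i => (k i : ℝ)) ∈ b • V) : (fun i => (j i : ℝ)) ∈ b • V := by
  rcases eq_or_lt_of_le hb with hb0 | hb0
  · subst hb0
    obtain ⟨v, hv, hkv⟩ := hk
    have hk0 : ∀ i, (k i : ℝ) = 0 := by
      intro i
      have := congrFun hkv i
      simpa using this.symm
    refine ⟨v, hv, ?_⟩
    funext i
    have : j i = 0 := by
      have := hjk i
      have hki : k i = 0 := by exact_mod_cast hk0 i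
      omega
    simp [this]
  · -- b > 0 : b • V is convex and satisfies Π
    have hconv' : Convex ℝ (b • V) := hconv.smul b
    have hPi' : ∀ t ∈ b • V, ∀ ε : Fin m → ℝ, (∀ i, ε i = 1 ∨ ε i = -1) →
        (fun i => ε i * |t i|) ∈ b • V := by
      rintro t ⟨v, hv, rfl⟩ ε hε
      refine ⟨fun i => ε i * |v i|, hPi v hv ε hε, ?_⟩
      funext i
      simp only [Pi.smul_apply, smul_eq_mul]
      rw [abs_mul, abs_of_pos hb0]
      ring
    exact box_mem hconv' hPi' hk (fun i => by
      rw [abs_of_nonneg (by positivity : (0:ℝ) ≤ (j i : ℝ)),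
        abs_of_nonneg (by positivity : (0:ℝ) ≤ (k i : ℝ))]
      exact_mod_cast hjk i)

/-- Support of a power of a polynomial supported on `{0, single i c}`. -/
lemma support_pow_single {i : Fin m} {c : ℕ} {p : MvPolynomial (Fin m) ℂ}
    (hp : p.support ⊆ {0, Finsupp.single i c}) (n : ℕ) :
    ∀ k ∈ (p ^ n).support, ∃ j ≤ n, k = Finsupp.single i (c * j) := by
  classical
  induction n with
  | zero =>
    intro k hk
    simp only [pow_zero] at hk
    refine ⟨0, le_refl _, ?_⟩
    have : k = 0 := by
      rw [show (1 : MvPolynomial (Fin m) ℂ) = monomial 0 1 by simp] at hk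
      simpa using MvPolynomial.support_monomial_subset hk
    simp [this]
  | succ n ih =>
    intro k hk
    rw [pow_succ] at hk
    obtain ⟨x, hx, y, hy, rfl⟩ := Finset.mem_add.mp (MvPolynomial.support_mul _ _ hk)
    obtain ⟨j, hj, rfl⟩ := ih x hx
    rcases Finset.mem_insert.mp (hp hy) with h0 | h1
    · exact ⟨j, le_trans hj (Nat.le_succ n), by simp [h0]⟩
    · refine ⟨j + 1, by omega, ?_⟩
      rw [Finset.mem_singleton.mp h1, ← Finsupp.single_add]
      ring_nf

/-- Support of a product over a finset of powers of such polynomials. -/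
lemma support_prod_pow {c : ℕ} {f : Fin m → MvPolynomial (Fin m) ℂ}
    (hf : ∀ i, (f i).support ⊆ {0, Finsupp.single i c}) (d : Fin m →₀ ℕ)
    (A : Finset (Fin m)) :
    ∀ k ∈ (∏ i ∈ A, (f i) ^ (d i)).support,
      (∀ i, c ∣ k i) ∧ (∀ i, k i ≤ c * d i) ∧ (∀ i ∉ A, k i = 0) := by
  classical
  induction A using Finset.induction with
  | empty =>
    intro k hk
    simp only [Finset.prod_empty] at hk
    have : k = 0 := by
      rw [show (1 : MvPolynomial (Fin m) ℂ) = monomial 0 1 by simp] at hk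
      simpa using MvPolynomial.support_monomial_subset hk
    simp [this]
  | @insert a A hnotmem ih =>
    intro k hk
    rw [Finset.prod_insert hnotmem] at hk
    obtain ⟨x, hx, y, hy, rfl⟩ := Finset.mem_add.mp (MvPolynomial.support_mul _ _ hk)
    obtain ⟨j, hj, rfl⟩ := support_pow_single (hf a) (d a) x hx
    obtain ⟨hy1, hy2, hy3⟩ := ih y hy
    have hya : y a = 0 := hy3 a hnotmem
    refine ⟨?_, ?_, ?_⟩
    · intro i
      simp only [Finsupp.coe_add, Pi.add_apply, Finsupp.single_apply]
      rcases eq_or_ne a i with h | h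
      · rw [if_pos h]; exact dvd_add ⟨j, rfl⟩ (hy1 i)
      · rw [if_neg h]; simpa using hy1 i
    · intro i
      simp only [Finsupp.coe_add, Pi.add_apply, Finsupp.single_apply]
      rcases eq_or_ne a i with h | h
      · rw [if_pos h, ← h, hya, add_zero]
        exact Nat.mul_le_mul_left c hj
      · rw [if_neg h]; simpa using hy2 i
    · intro i hi
      simp only [Finset.mem_insert, not_or] at hi
      simp only [Finsupp.coe_add, Pi.add_apply, Finsupp.single_apply]
      rw [if_neg (fun h => hi.1 h.symm), hy3 i hi.2]

/-- Main support lemma for `bind₁` with substitutions supported on `{0, single i c}`. -/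
lemma support_bind₁ {c : ℕ} {f : Fin m → MvPolynomial (Fin m) ℂ}
    (hf : ∀ i, (f i).support ⊆ {0, Finsupp.single i c}) (Q : MvPolynomial (Fin m) ℂ) :
    ∀ k ∈ (bind₁ f Q).support,
      ∃ d ∈ Q.support, (∀ i, c ∣ k i) ∧ ∀ i, k i ≤ c * d i := by
  classical
  intro k hk
  conv at hk => rw [show bind₁ f Q = aeval f Q from rfl,
    ← MvPolynomial.support_sum_monomial_coeff Q, map_sum]
  obtain ⟨d, hd, hkd⟩ := Finset.mem_biUnion.mp (MvPolynomial.support_sum hk)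
  refine ⟨d, hd, ?_⟩
  rw [MvPolynomial.aeval_monomial] at hkd
  obtain ⟨x, hx, y, hy, rfl⟩ := Finset.mem_add.mp (MvPolynomial.support_mul _ _ hkd)
  have hx0 : x = 0 := by
    have : (algebraMap ℂ (MvPolynomial (Fin m) ℂ)) (coeff d Q) = C (coeff d Q) := rfl
    rw [this, MvPolynomial.C_apply] at hx
    simpa using MvPolynomial.support_monomial_subset hx
  subst hx0
  rw [zero_add]
  have := support_prod_pow hf d d.support y hy
  exact ⟨this.1, this.2.1⟩

lemma supp_f (i : Fin m) :
    (1 - 2 * X i ^ 2 : MvPolynomial (Fin m) ℂ).support ⊆ {0, Finsupp.single i 2} := by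
  classical
  have h : (1 - 2 * X i ^ 2 : MvPolynomial (Fin m) ℂ)
      = monomial 0 1 + monomial (Finsupp.single i 2) (-2) := by
    rw [monomial_eq, monomial_eq]
    rw [Finsupp.prod_single_index (by simp), Finsupp.prod_zero_index]
    simp only [map_neg, map_one, map_ofNat]
    ring
  rw [h]
  refine (support_add).trans (Finset.union_subset ?_ ?_) <;>
    refine (support_monomial_subset).trans ?_ <;> intro k hk <;>
    simp only [Finset.mem_singleton] at hk <;> simp [hk]

lemma supp_g (i : Fin m) :
    (C (2⁻¹ : ℂ) * (1 - X i)).support ⊆ {0, Finsupp.single i 1} := by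
  classical
  have h : (C (2⁻¹ : ℂ) * (1 - X i) : MvPolynomial (Fin m) ℂ)
      = monomial 0 2⁻¹ + monomial (Finsupp.single i 1) (-2⁻¹) := by
    rw [monomial_eq, monomial_eq]
    rw [Finsupp.prod_single_index (by simp), Finsupp.prod_zero_index]
    simp only [map_neg, map_one]
    ring
  rw [h]
  refine (support_add).trans (Finset.union_subset ?_ ?_) <;>
    refine (support_monomial_subset).trans ?_ <;> intro k hk <;>
    simp only [Finset.mem_singleton] at hk <;> simp [hk]

lemma comp_fg (i : Fin m) :
    bind₁ (fun j => 1 - 2 * X j ^ 2 : Fin m → MvPolynomial (Fin m) ℂ)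
      (C (2⁻¹ : ℂ) * (1 - X i)) = X i ^ 2 := by
  rw [map_mul, map_sub, map_one, bind₁_X_right, algHom_C]
  have h2 : ((algebraMap ℂ (MvPolynomial (Fin m) ℂ)) (2⁻¹ : ℂ)) * 2 = 1 := by
    rw [show (2 : MvPolynomial (Fin m) ℂ) = C 2 from (map_ofNat C 2).symm]
    rw [show ((algebraMap ℂ (MvPolynomial (Fin m) ℂ)) (2⁻¹ : ℂ)) = C 2⁻¹ from rfl, ← C_mul]
    norm_num
  calc (algebraMap ℂ (MvPolynomial (Fin m) ℂ)) (2⁻¹:ℂ) * (1 - (1 - 2 * X i ^ 2))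
      = ((algebraMap ℂ (MvPolynomial (Fin m) ℂ)) (2⁻¹:ℂ) * 2) * X i ^ 2 := by ring
    _ = X i ^ 2 := by rw [h2, one_mul]

/-- doubling a finsupp exponent -/
noncomputable def dbl (d : Fin m →₀ ℕ) : Fin m →₀ ℕ :=
  Finsupp.mapRange (2 * ·) (by simp) d

lemma bind₁_sq_monomial (d : Fin m →₀ ℕ) (r : ℂ) :
    bind₁ (fun i => X i ^ 2 : Fin m → MvPolynomial (Fin m) ℂ) (monomial d r)
      = monomial (dbl d) r := by
  rw [show (bind₁ (fun i => X i ^ 2 : Fin m → MvPolynomial (Fin m) ℂ)) (monomial d r)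
      = aeval (fun i => X i ^ 2) (monomial d r) from rfl, aeval_monomial]
  rw [monomial_eq, dbl, Finsupp.prod_mapRange_index (by simp)]
  congr 1
  apply Finsupp.prod_congr
  intro i _
  rw [← pow_mul]

noncomputable def hlf {m : ℕ} (k : Fin m →₀ ℕ) : Fin m →₀ ℕ :=
  Finsupp.mapRange (· / 2) (Nat.zero_div 2) k

open Pointwise in
theorem stmt9 (m : ℕ) (hm : 1 ≤ m) (V : Set (Fin m → ℝ)) (a : ℝ) (ha : 0 ≤ a)
    (hconv : Convex ℝ V) (hclosed : IsClosed V) (hbdd : Bornology.IsBounded V)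
    (hsymm : ∀ t ∈ V, -t ∈ V)
    (hPi : ∀ t ∈ V, ∀ ε : Fin m → ℝ, (∀ i, ε i = 1 ∨ ε i = -1) →
      (fun i => ε i * |t i|) ∈ V) :
    {P : MvPolynomial (Fin m) ℂ |
        ∃ R : MvPolynomial (Fin m) ℂ,
          (∀ k ∈ R.support, (fun i => (k i : ℝ)) ∈ a • V) ∧
          P = MvPolynomial.bind₁ (fun i => 1 - 2 * MvPolynomial.X i ^ 2) R} =
      {P : MvPolynomial (Fin m) ℂ |
        (∀ k ∈ P.support, (fun i => (k i : ℝ)) ∈ (2 * a) • V) ∧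
        ∀ k ∈ P.support, ∀ i, Even (k i)} := by
  classical
  ext P
  simp only [Set.mem_setOf_eq]
  constructor
  · rintro ⟨R, hR, rfl⟩
    constructor
    · intro k hk
      obtain ⟨d, hd, hdvd, hle⟩ := support_bind₁ supp_f R k hk
      obtain ⟨v, hv, hdv⟩ := hR d hd
      have h2d : (fun i => ((2 * d i : ℕ) : ℝ)) ∈ (2 * a) • V := by
        refine ⟨v, hv, ?_⟩
        funext i
        have := congrFun hdv i
        simp only [Pi.smul_apply, smul_eq_mul] at this ⊢
        push_cast
        rw [mul_assoc, this]
      exact mem_smul_of_le hconv hPi (by linarith) (fun i => hle i) h2d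
    · intro k hk i
      obtain ⟨d, hd, hdvd, hle⟩ := support_bind₁ supp_f R k hk
      exact (even_iff_two_dvd).mpr (hdvd i)
  · rintro ⟨hsupp, heven⟩
    set Q : MvPolynomial (Fin m) ℂ :=
      ∑ k ∈ P.support, monomial (hlf k) (coeff k P) with hQ
    refine ⟨bind₁ (fun i => C (2⁻¹ : ℂ) * (1 - X i)) Q, ?_, ?_⟩
    · intro k hk
      obtain ⟨d, hd, _, hle⟩ := support_bind₁ supp_g Q k hk
      obtain ⟨k₀, hk₀, hdk₀⟩ : ∃ k₀ ∈ P.support, d = hlf k₀ := by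
        obtain ⟨k₀, hk₀, hd'⟩ := Finset.mem_biUnion.mp (support_sum (hQ ▸ hd))
        exact ⟨k₀, hk₀, Finset.mem_singleton.mp (support_monomial_subset hd')⟩
      have hhalf : (fun i => ((k₀ i / 2 : ℕ) : ℝ)) ∈ a • V := by
        obtain ⟨v, hv, hkv⟩ := hsupp k₀ hk₀
        refine ⟨v, hv, ?_⟩
        funext i
        have := congrFun hkv i
        simp only [Pi.smul_apply, smul_eq_mul] at this ⊢
        have hdvd2 : (2 : ℕ) ∣ k₀ i := (heven k₀ hk₀ i).two_dvd
        rw [Nat.cast_div hdvd2 (by norm_num)]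
        rw [← this]
        ring
      refine mem_smul_of_le hconv hPi ha (fun i => ?_) hhalf
      have := hle i
      rw [one_mul] at this
      rw [hdk₀] at this
      simpa [hlf, Finsupp.mapRange_apply] using this
    · rw [bind₁_bind₁]
      have hcomp : (fun i => bind₁ (fun j => 1 - 2 * X j ^ 2 : Fin m → MvPolynomial (Fin m) ℂ)
          (C (2⁻¹ : ℂ) * (1 - X i))) = fun i => X i ^ 2 := by
          funext i; exact comp_fg i
      rw [hcomp, hQ, map_sum]
      have : ∀ k ∈ P.support,
          bind₁ (fun i => X i ^ 2 : Fin m → MvPolynomial (Fin m) ℂ)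
            (monomial (hlf k) (coeff k P)) = monomial k (coeff k P) := by
        intro k hk
        rw [bind₁_sq_monomial]
        have hdk : dbl (hlf k) = k := by
          ext i
          simp only [dbl, hlf, Finsupp.mapRange_apply]
          exact Nat.two_mul_div_two_of_even (heven k hk i)
        rw [hdk]
      rw [Finset.sum_congr rfl this, support_sum_monomial_coeff]
end

section
/- For n ∈ ℤ₊, sup over nonzero polynomials P of degree at most n of ‖P‖_{L_∞([-1,1])} / (∫_{-1}^1 |P(u)|² du)^{1/2} = (n+1)/√2. -/
open MeasureTheory Polynomial Finset

namespace Stmt11Proof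

noncomputable section


/-- integral of a polynomial over [-1,1] -/
def Pint (p : ℝ[X]) : ℝ := ∫ x in (-1:ℝ)..1, p.eval x

lemma pint_intable (p : ℝ[X]) : IntervalIntegrable (fun x => p.eval x) volume (-1) 1 :=
  (p.continuous_aeval).intervalIntegrable _ _

lemma Pint_add (p q : ℝ[X]) : Pint (p + q) = Pint p + Pint q := by
  unfold Pint
  simp only [eval_add]
  exact intervalIntegral.integral_add (pint_intable p) (pint_intable q)

lemma Pint_smul (a : ℝ) (p : ℝ[X]) : Pint (C a * p) = a * Pint p := by
  unfold Pint
  simp only [eval_mul, eval_C]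
  exact intervalIntegral.integral_const_mul a _

lemma Pint_deriv (p : ℝ[X]) : Pint (derivative p) = p.eval 1 - p.eval (-1) := by
  unfold Pint
  exact intervalIntegral.integral_deriv_eq_sub'
    (fun x => p.eval x)
    (funext fun x => (Polynomial.deriv (p := p)).symm ▸ rfl)
    (fun x _ => (p.differentiable).differentiableAt)
    ((derivative p).continuous_aeval.continuousOn)

lemma Pint_parts (p q : ℝ[X]) :
    Pint (derivative p * q) =
      (p.eval 1 * q.eval 1 - p.eval (-1) * q.eval (-1)) - Pint (p * derivative q) := by
  have h := Pint_deriv (p * q)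
  rw [derivative_mul, Pint_add] at h
  simp only [eval_mul] at h
  linarith



/-- (X^2-1)^k -/
def U (k : ℕ) : ℝ[X] := ((X:ℝ[X])^2 - 1)^k

lemma U_factor (k : ℕ) : U k = (X - C 1)^k * (X + C 1)^k := by
  unfold U
  rw [← mul_pow]
  congr 1
  rw [C_1]
  ring

lemma U_factor' (k : ℕ) : U k = (X - C (-1))^k * (X - C 1)^k := by
  unfold U
  rw [← mul_pow]
  simp only [map_neg, C_1]
  ring

-- Leibniz at a root of exact multiplicity
lemma eval_iterate_derivative_pow_mul (a : ℝ) :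
    ∀ (k : ℕ) (q : ℝ[X]), (derivative^[k] ((X - C a)^k * q)).eval a = k.factorial * q.eval a := by
  intro k
  induction k with
  | zero => simp
  | succ k ih =>
    intro q
    have hd : derivative ((X - C a)^(k+1) * q)
        = (X - C a)^k * (C (k+1:ℝ) * q + (X - C a) * derivative q) := by
      rw [derivative_mul, derivative_pow]
      simp only [derivative_sub, derivative_X, derivative_C, sub_zero, mul_one]
      push_cast
      ring
    rw [Function.iterate_succ_apply, hd, ih]
    simp [Nat.factorial_succ]
    ring

lemma eval_U_iter_one (k : ℕ) : (derivative^[k] (U k)).eval 1 = k.factorial * 2^k := by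
  rw [U_factor, eval_iterate_derivative_pow_mul]
  norm_num

lemma eval_U_iter_negone (k : ℕ) : (derivative^[k] (U k)).eval (-1) = k.factorial * (-2)^k := by
  rw [U_factor', eval_iterate_derivative_pow_mul]
  norm_num

lemma vanish_one {j k : ℕ} (h : j < k) : (derivative^[j] (U k)).eval 1 = 0 := by
  have hdvd : (X - C (1:ℝ))^k ∣ U k := ⟨(X + C 1)^k, U_factor k⟩
  have := Polynomial.pow_sub_dvd_iterate_derivative_of_pow_dvd j hdvd
  obtain ⟨r, hr⟩ := this
  rw [hr]
  simp [sub_eq_zero, zero_pow (Nat.sub_ne_zero_of_lt h)]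

lemma vanish_negone {j k : ℕ} (h : j < k) : (derivative^[j] (U k)).eval (-1) = 0 := by
  have hdvd : (X - C (-1:ℝ))^k ∣ U k := ⟨(X - C 1)^k, U_factor' k⟩
  have := Polynomial.pow_sub_dvd_iterate_derivative_of_pow_dvd j hdvd
  obtain ⟨r, hr⟩ := this
  rw [hr]
  simp [zero_pow (Nat.sub_ne_zero_of_lt h)]




-- placeholders for already-proven lemmas

lemma iterflip (k : ℕ) (q : ℝ[X]) :
    ∀ j, j ≤ k → Pint (derivative^[k] (U k) * q)
      = (-1:ℝ)^j * Pint (derivative^[k-j] (U k) * derivative^[j] q) := by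
  intro j
  induction j with
  | zero => simp
  | succ j ih =>
    intro hj
    have hjk : j < k := Nat.lt_of_succ_le hj
    rw [ih hjk.le]
    have hk : k - j = (k - (j+1)) + 1 := by omega
    have hstep : Pint (derivative^[k-j] (U k) * derivative^[j] q)
        = - Pint (derivative^[k-(j+1)] (U k) * derivative^[j+1] q) := by
      have h1 : derivative^[k-j] (U k) = derivative (derivative^[k-(j+1)] (U k)) := by
        rw [hk, Function.iterate_succ_apply']
      rw [h1, Pint_parts, vanish_one (by omega), vanish_negone (by omega),
        Function.iterate_succ_apply']
      ring
    rw [hstep]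
    ring

lemma orth_low {k : ℕ} {q : ℝ[X]} (h : q.natDegree < k) :
    Pint (derivative^[k] (U k) * q) = 0 := by
  rw [iterflip k q k le_rfl, Polynomial.iterate_derivative_eq_zero h]
  have : ((derivative^[k - k] (U k)) * 0 : ℝ[X]) = 0 := by ring
  rw [this]
  have h0 : Pint 0 = 0 := by unfold Pint; simp
  rw [h0, mul_zero]

lemma flip_full (k : ℕ) (q : ℝ[X]) :
    Pint (derivative^[k] (U k) * q) = (-1:ℝ)^k * Pint (U k * derivative^[k] q) := by
  rw [iterflip k q k le_rfl]
  simp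

lemma eval_U_one {k : ℕ} (hk : 0 < k) : (U k).eval 1 = 0 := by
  simp [U, zero_pow hk.ne']

lemma eval_U_negone {k : ℕ} (hk : 0 < k) : (U k).eval (-1) = 0 := by
  simp [U, zero_pow hk.ne']

lemma U_succ (k : ℕ) : U (k+1) = ((X:ℝ[X])^2 - 1) * U k := by
  unfold U; ring

lemma deriv_XU (k : ℕ) :
    derivative (X * U (k+1)) = C (2*(k:ℝ)+3) * U (k+1) + C (2*(k:ℝ)+2) * U k := by
  rw [derivative_mul, derivative_X]
  unfold U
  rw [derivative_pow]
  simp only [derivative_sub, derivative_one, derivative_X, derivative_pow, Nat.add_sub_cancel,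
    derivative_ofNat, sub_zero, mul_one, pow_one]
  simp only [map_add, map_mul, map_ofNat, C_eq_natCast, C_1]
  push_cast
  ring

lemma Pint_U : ∀ k : ℕ, Pint (U k) =
    (-1:ℝ)^k * 2^(2*k+1) * (k.factorial)^2 / ((2*k+1).factorial) := by
  intro k
  induction k with
  | zero =>
    simp only [U, pow_zero, Nat.factorial]
    unfold Pint
    norm_num
  | succ k ih =>
    have h := congrArg Pint (deriv_XU k)
    rw [Pint_deriv, Pint_add, Pint_smul, Pint_smul] at h
    simp only [eval_mul, eval_X, eval_U_one (Nat.succ_pos k), eval_U_negone (Nat.succ_pos k),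
      mul_zero, sub_zero, zero_sub, neg_zero, zero_mul] at h
    -- h : 0 = (2k+3) * Pint (U (k+1)) + (2k+2) * Pint (U k)
    have h2 : Pint (U (k+1)) = -(2*(k:ℝ)+2)/(2*(k:ℝ)+3) * Pint (U k) := by
      have h3 : (2*(k:ℝ)+3) ≠ 0 := by positivity
      field_simp at h ⊢
      linarith
    rw [h2, ih]
    have hfac : ((2*(k+1)+1).factorial : ℝ)
        = (2*(k:ℝ)+3) * (2*(k:ℝ)+2) * ((2*k+1).factorial : ℝ) := by
      have : 2*(k+1)+1 = (2*k+1) + 1 + 1 := by ring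
      rw [this, Nat.factorial_succ, Nat.factorial_succ]
      push_cast
      ring
    have hfk : (((k+1).factorial : ℕ) : ℝ) = ((k:ℝ)+1) * (k.factorial : ℝ) := by
      rw [Nat.factorial_succ]; push_cast; ring
    have hpow : (2:ℝ)^(2*(k+1)+1) = 2^(2*k+1) * 4 := by
      have : 2*(k+1)+1 = (2*k+1)+2 := by ring
      rw [this, pow_add]; norm_num
    have hneg : (-1:ℝ)^(k+1) = (-1)^k * (-1) := by rw [pow_succ]
    rw [hfac, hfk, hpow, hneg]
    have hf1 : ((2*k+1).factorial : ℝ) ≠ 0 := by positivity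
    have h3 : (2*(k:ℝ)+3) ≠ 0 := by positivity
    have h4 : (2*(k:ℝ)+2) ≠ 0 := by positivity
    field_simp
    ring



def leg (k : ℕ) : ℝ[X] := C ((2^k * k.factorial : ℝ))⁻¹ * derivative^[k] (U k)


lemma ck_ne (k : ℕ) : ((2:ℝ)^k * k.factorial) ≠ 0 := by positivity

lemma U_natDegree (k : ℕ) : (U k).natDegree = 2*k := by
  unfold U
  have h2 : ((X:ℝ[X])^2 - 1).natDegree = 2 := by
    have : ((X:ℝ[X])^2 - 1) = X^2 - C 1 := by rw [C_1]
    rw [this, natDegree_X_pow_sub_C]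
  have hm : ((X:ℝ[X])^2 - 1).Monic := by
    have : ((X:ℝ[X])^2 - 1) = X^2 - C 1 := by rw [C_1]
    rw [this]
    exact monic_X_pow_sub_C 1 (by norm_num)
  rw [hm.natDegree_pow, h2]
  ring

lemma U_monic (k : ℕ) : (U k).Monic := by
  unfold U
  have hm : ((X:ℝ[X])^2 - 1).Monic := by
    have : ((X:ℝ[X])^2 - 1) = X^2 - C 1 := by rw [C_1]
    rw [this]
    exact monic_X_pow_sub_C 1 (by norm_num)
  exact hm.pow k

lemma iter_deriv_full {p : ℝ[X]} {m : ℕ} (h : p.natDegree ≤ m) :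
    derivative^[m] p = C ((m.factorial : ℝ) * p.coeff m) := by
  have hdeg : (derivative^[m] p).natDegree ≤ 0 := by
    refine le_trans (natDegree_iterate_derivative p m) ?_
    omega
  rw [eq_C_of_natDegree_le_zero hdeg, coeff_iterate_derivative]
  simp [Nat.descFactorial_self, nsmul_eq_mul]

lemma leg_natDegree_le (k : ℕ) : (leg k).natDegree ≤ k := by
  refine le_trans (natDegree_C_mul_le _ _) ?_
  refine le_trans (natDegree_iterate_derivative _ _) ?_
  rw [U_natDegree]
  omega

lemma leg_coeff_top (k : ℕ) :
    (leg k).coeff k = ((2^k * k.factorial : ℝ))⁻¹ * ((2*k).descFactorial k : ℝ) := by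
  unfold leg
  rw [coeff_C_mul, coeff_iterate_derivative]
  have h2 : k + k = 2*k := by ring
  have hc : (U k).coeff (k+k) = 1 := by
    rw [h2]
    have := (U_monic k).coeff_natDegree
    rwa [U_natDegree] at this
  rw [hc, h2]
  simp [nsmul_eq_mul]

lemma leg_coeff_top_ne (k : ℕ) : (leg k).coeff k ≠ 0 := by
  rw [leg_coeff_top]
  have h1 : ((2*k).descFactorial k : ℝ) ≠ 0 := by
    have h0 : ¬ ((2*k).descFactorial k = 0) := by
      rw [Nat.descFactorial_eq_zero_iff_lt]
      omega
    exact_mod_cast h0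
  have := ck_ne k
  positivity

lemma leg_eval_one (k : ℕ) : (leg k).eval 1 = 1 := by
  unfold leg
  rw [eval_mul, eval_C, eval_U_iter_one]
  field_simp

lemma leg_eval_negone (k : ℕ) : (leg k).eval (-1) = (-1)^k := by
  unfold leg
  rw [eval_mul, eval_C, eval_U_iter_negone]
  have : ((-2:ℝ))^k = (-1)^k * 2^k := by
    rw [← neg_one_mul, mul_pow]
  rw [this]
  field_simp

lemma leg_orth {j k : ℕ} (h : j < k) : Pint (leg k * leg j) = 0 := by
  have hdeg : (leg j).natDegree < k := lt_of_le_of_lt (leg_natDegree_le j) h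
  have : leg k * leg j = C ((2^k * k.factorial : ℝ))⁻¹ * (derivative^[k] (U k) * leg j) := by
    unfold leg; ring
  rw [this, Pint_smul, orth_low hdeg, mul_zero]

lemma leg_norm (k : ℕ) : Pint (leg k * leg k) = 2 / (2*(k:ℝ)+1) := by
  set c : ℝ := ((2^k * k.factorial : ℝ))⁻¹ with hc
  have h1 : leg k * leg k = C c * (C c * (derivative^[k] (U k) * derivative^[k] (U k))) := by
    unfold leg; ring
  rw [h1, Pint_smul, Pint_smul, flip_full]
  have h2 : derivative^[k] (derivative^[k] (U k)) = C (((2*k).factorial : ℝ)) := by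
    rw [← Function.iterate_add_apply]
    have hdeg : (U k).natDegree ≤ k + k := by rw [U_natDegree]; omega
    rw [iter_deriv_full hdeg]
    have hc2 : (U k).coeff (k+k) = 1 := by
      have := (U_monic k).coeff_natDegree
      rw [U_natDegree] at this
      have h3 : k + k = 2*k := by ring
      rwa [h3]
    rw [hc2, mul_one]
    congr 1
    congr 1
    ring
  rw [h2]
  have h3 : U k * C (((2*k).factorial : ℝ)) = C (((2*k).factorial : ℝ)) * U k := by ring
  rw [h3, Pint_smul, Pint_U]
  have hfac : (((2*k+1).factorial : ℕ) : ℝ) = (2*(k:ℝ)+1) * ((2*k).factorial : ℝ) := by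
    rw [Nat.factorial_succ]; push_cast; ring
  rw [hfac]
  have hf2 : (((2*k).factorial : ℕ) : ℝ) ≠ 0 := by positivity
  have hf3 : ((k.factorial : ℕ) : ℝ) ≠ 0 := by positivity
  have h5 : (2*(k:ℝ)+1) ≠ 0 := by positivity
  have hpow : (2:ℝ)^(2*k+1) = 2^k * 2^k * 2 := by
    rw [pow_add, two_mul, pow_add]
    norm_num
  rw [hpow, hc]
  have h2k : ((2:ℝ))^k ≠ 0 := by positivity
  field_simp
  rcases neg_one_pow_eq_or ℝ k with h | h <;> rw [h] <;> ring





lemma baseRel (k : ℕ) :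
    ((X:ℝ[X])^2 - 1) * derivative (U k) = 2*(k:ℝ[X]) * X * U k := by
  cases k with
  | zero => simp [U]
  | succ k =>
    unfold U
    rw [derivative_pow]
    simp only [derivative_sub, derivative_one, derivative_X_pow, Nat.add_sub_cancel, sub_zero,
      map_ofNat, C_eq_natCast]
    push_cast
    ring

lemma iterRel (k : ℕ) : ∀ m : ℕ,
    ((X:ℝ[X])^2 - 1) * derivative^[m+2] (U k)
      + (2*(m:ℝ[X])+2) * X * derivative^[m+1] (U k)
      + ((m:ℝ[X])*((m:ℝ[X])+1)) * derivative^[m] (U k)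
    = 2*(k:ℝ[X]) * (X * derivative^[m+1] (U k) + ((m:ℝ[X])+1) * derivative^[m] (U k)) := by
  intro m
  induction m with
  | zero =>
    have h := congrArg derivative (baseRel k)
    simp only [derivative_mul, derivative_sub, derivative_one, derivative_X_pow, derivative_X,
      derivative_natCast, derivative_ofNat, Nat.add_sub_cancel, map_ofNat, C_eq_natCast] at h
    have e0 : derivative^[0] (U k) = U k := rfl
    have e1 : derivative^[0+1] (U k) = derivative (U k) := by
      rw [Function.iterate_succ_apply', e0]
    have e2 : derivative^[0+2] (U k) = derivative (derivative (U k)) := by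
      have h12 : (0+2 : ℕ) = (0+1)+1 := rfl
      rw [h12, Function.iterate_succ_apply', e1]
    rw [e0, e1, e2]
    push_cast
    push_cast at h
    linear_combination h
  | succ m ih =>
    have h := congrArg derivative ih
    simp only [derivative_mul, derivative_add, derivative_sub, derivative_one, derivative_X_pow,
      derivative_X, derivative_natCast, derivative_ofNat, Nat.add_sub_cancel, map_ofNat,
      C_eq_natCast] at h
    -- turn derivative (derivative^[j] p) into derivative^[j+1] p
    simp only [← Function.iterate_succ_apply'] at h
    push_cast at h ⊢
    linear_combination h

lemma odeU (k : ℕ) :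
    ((X:ℝ[X])^2 - 1) * derivative^[k+2] (U k) + 2 * X * derivative^[k+1] (U k)
      = (k:ℝ[X])*((k:ℝ[X])+1) * derivative^[k] (U k) := by
  have h := iterRel k k
  linear_combination h

lemma Lode (k : ℕ) :
    ((X:ℝ[X])^2 - 1) * derivative (derivative (leg k)) + 2 * X * derivative (leg k)
      = (k:ℝ[X])*((k:ℝ[X])+1) * leg k := by
  unfold leg
  rw [derivative_C_mul, derivative_C_mul]
  have h := odeU k
  have h2 : derivative (derivative^[k] (U k)) = derivative^[k+1] (U k) :=
    (Function.iterate_succ_apply' derivative k (U k)).symm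
  have h1 : derivative (derivative (derivative^[k] (U k))) = derivative^[k+2] (U k) := by
    rw [h2]
    have := (Function.iterate_succ_apply' derivative (k+1) (U k)).symm
    rw [this]
  rw [h1, h2]
  linear_combination (C ((2^k * k.factorial : ℝ))⁻¹) * h

lemma Lode_eval (k : ℕ) (x : ℝ) :
    (x^2 - 1) * (derivative (derivative (leg k))).eval x + 2*x*(derivative (leg k)).eval x
      = ((k:ℝ)*((k:ℝ)+1)) * (leg k).eval x := by
  have h := congrArg (eval x) (Lode k)
  simpa using h

lemma leg_sq_le (k : ℕ) {x : ℝ} (hx : x ∈ Set.Icc (-1:ℝ) 1) : ((leg k).eval x)^2 ≤ 1 := by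
  rcases Nat.eq_zero_or_pos k with hk | hk
  · subst hk
    simp [leg, U]
  set L := leg k with hL
  set L1 := derivative (leg k) with hL1
  set L2 := derivative (derivative (leg k)) with hL2
  set c : ℝ := ((k:ℝ)*((k:ℝ)+1))⁻¹ with hcdef
  have hK : (0:ℝ) < (k:ℝ)*((k:ℝ)+1) := by
    have : (0:ℝ) < (k:ℝ) := by exact_mod_cast hk
    positivity
  have hc : ((k:ℝ)*((k:ℝ)+1)) * c = 1 := mul_inv_cancel₀ hK.ne'
  have hcpos : 0 < c := by rw [hcdef]; positivity
  set g : ℝ → ℝ := fun y => (L.eval y)^2 + c*((1-y^2)*(L1.eval y)^2) with hg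
  have hder : ∀ y : ℝ, HasDerivAt g (2*c*y*(L1.eval y)^2) y := by
    intro y
    have h1 : HasDerivAt (fun z => (L.eval z)^2) (2*(L.eval y)*(L1.eval y)) y := by
      have := (L.hasDerivAt y).fun_pow 2
      simpa [hL1] using this
    have hA : HasDerivAt (fun z : ℝ => 1 - z^2) (-(2*y)) y := by
      have := (hasDerivAt_pow 2 y).const_sub 1
      simpa using this
    have hB : HasDerivAt (fun z => (L1.eval z)^2) (2*(L1.eval y)*(L2.eval y)) y := by
      have := (L1.hasDerivAt y).fun_pow 2
      simpa [hL2] using this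
    have h2 := (hA.mul hB).const_mul c
    have h3 := h1.add h2
    refine h3.congr_deriv (Eq.symm ?_)
    have hode := Lode_eval k y
    linear_combination (2*c*(Polynomial.eval y L1)) * hode + (2*(Polynomial.eval y L)*(Polynomial.eval y L1)) * hc
  have hdiff : Differentiable ℝ g := fun y => (hder y).differentiableAt
  have hderiv : ∀ y, deriv g y = 2*c*y*(L1.eval y)^2 := fun y => (hder y).deriv
  have hmono : MonotoneOn g (Set.Icc (0:ℝ) 1) := by
    refine monotoneOn_of_deriv_nonneg (convex_Icc _ _) hdiff.continuous.continuousOn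
      (fun y _ => (hdiff y).differentiableWithinAt) ?_
    intro y hy
    rw [interior_Icc] at hy
    rw [hderiv]
    have : (0:ℝ) ≤ y := hy.1.le
    positivity
  have hanti : AntitoneOn g (Set.Icc (-1:ℝ) 0) := by
    refine antitoneOn_of_deriv_nonpos (convex_Icc _ _) hdiff.continuous.continuousOn
      (fun y _ => (hdiff y).differentiableWithinAt) ?_
    intro y hy
    rw [interior_Icc] at hy
    rw [hderiv]
    have hy0 : y ≤ 0 := hy.2.le
    nlinarith [mul_nonneg (mul_nonneg hcpos.le (sq_nonneg (L1.eval y))) (neg_nonneg.2 hy0)]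
  have hg1 : g 1 = 1 := by
    simp only [hg]
    rw [hL]
    simp [leg_eval_one k]
  have hgm1 : g (-1) = 1 := by
    simp only [hg]
    rw [hL]
    have : ((leg k).eval (-1))^2 = 1 := by
      rw [leg_eval_negone k, ← pow_mul, mul_comm k 2, pow_mul]
      norm_num
    simp [this]
  have hgle : g x ≤ 1 := by
    rcases le_or_gt 0 x with hx0 | hx0
    · have := hmono (Set.mem_Icc.mpr ⟨hx0, hx.2⟩) (Set.mem_Icc.mpr ⟨zero_le_one, le_rfl⟩) hx.2
      rw [hg1] at this
      exact this
    · have := hanti (Set.mem_Icc.mpr ⟨le_rfl, by norm_num⟩)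
        (Set.mem_Icc.mpr ⟨hx.1, hx0.le⟩) hx.1
      rw [hgm1] at this
      exact this
  have hterm : 0 ≤ c*((1-x^2)*(L1.eval x)^2) := by
    have h1 : 0 ≤ 1 - x^2 := by nlinarith [hx.1, hx.2]
    positivity
  have : (L.eval x)^2 ≤ g x := by
    simp only [hg]
    linarith
  linarith





lemma Pint_zero : Pint 0 = 0 := by unfold Pint; simp

lemma Pint_sum {ι : Type*} (s : Finset ι) (f : ι → ℝ[X]) :
    Pint (∑ i ∈ s, f i) = ∑ i ∈ s, Pint (f i) := by
  classical
  induction s using Finset.induction_on with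
  | empty => simpa using Pint_zero
  | insert _ _ hni ih =>
    rw [Finset.sum_insert hni, Finset.sum_insert hni, Pint_add, ih]

lemma leg_zero : leg 0 = 1 := by
  simp [leg, U]

lemma leg_orth' {j k : ℕ} (h : j ≠ k) : Pint (leg k * leg j) = 0 := by
  rcases lt_or_gt_of_ne h with h1 | h1
  · exact leg_orth h1
  · rw [mul_comm]; exact leg_orth h1

lemma exists_expansion : ∀ (n : ℕ) (p : ℝ[X]), p.natDegree ≤ n →
    ∃ c : ℕ → ℝ, p = ∑ k ∈ range (n+1), C (c k) * leg k := by
  intro n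
  induction n with
  | zero =>
    intro p hp
    refine ⟨fun _ => p.coeff 0, ?_⟩
    rw [eq_C_of_natDegree_le_zero hp]
    simp [leg_zero]
  | succ n ih =>
    intro p hp
    set a : ℝ := p.coeff (n+1) / (leg (n+1)).coeff (n+1) with ha
    set q : ℝ[X] := p - C a * leg (n+1) with hq
    have hqdeg : q.natDegree ≤ n := by
      rw [natDegree_le_iff_coeff_eq_zero]
      intro N hN
      rcases eq_or_lt_of_le (Nat.succ_le_of_lt hN) with hN1 | hN1
      · have hne := leg_coeff_top_ne (n+1)
        rw [hq, coeff_sub, coeff_C_mul, ← hN1, ha]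
        field_simp
        ring
      · have h1 : p.coeff N = 0 := coeff_eq_zero_of_natDegree_lt (lt_of_le_of_lt hp hN1)
        have h2 : (leg (n+1)).coeff N = 0 :=
          coeff_eq_zero_of_natDegree_lt (lt_of_le_of_lt (leg_natDegree_le (n+1)) hN1)
        rw [hq, coeff_sub, coeff_C_mul, h1, h2]
        ring
    obtain ⟨c, hc⟩ := ih q hqdeg
    refine ⟨Function.update c (n+1) a, ?_⟩
    rw [Finset.sum_range_succ]
    have h3 : ∀ k ∈ range (n+1), C (Function.update c (n+1) a k) * leg k = C (c k) * leg k := by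
      intro k hk
      have : k ≠ n+1 := by
        have := Finset.mem_range.mp hk
        omega
      rw [Function.update_of_ne this]
    rw [Finset.sum_congr rfl h3, ← hc, Function.update_self, hq]
    ring

lemma Pint_sq_expansion (n : ℕ) (c : ℕ → ℝ) :
    Pint ((∑ k ∈ range (n+1), C (c k) * leg k) * (∑ k ∈ range (n+1), C (c k) * leg k))
      = ∑ k ∈ range (n+1), (c k)^2 * (2 / (2*(k:ℝ)+1)) := by
  rw [Finset.sum_mul_sum]
  have h1 : ∀ k j, (C (c k) * leg k) * (C (c j) * leg j)
      = C (c k * c j) * (leg k * leg j) := by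
    intro k j
    rw [C_mul]
    ring
  have h2 : Pint (∑ i ∈ range (n+1), ∑ j ∈ range (n+1), C (c i) * leg i * (C (c j) * leg j))
      = ∑ i ∈ range (n+1), ∑ j ∈ range (n+1), (c i * c j) * Pint (leg i * leg j) := by
    rw [Pint_sum]
    refine Finset.sum_congr rfl fun i _ => ?_
    rw [Pint_sum]
    refine Finset.sum_congr rfl fun j _ => ?_
    rw [h1, Pint_smul]
  rw [h2]
  refine Finset.sum_congr rfl fun i hi => ?_
  rw [Finset.sum_eq_single i]
  · rw [leg_norm]
    ring
  · intro j _ hji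
    rw [leg_orth' hji, mul_zero]
  · intro h
    exact absurd hi h

lemma sum_odds (n : ℕ) : ∑ k ∈ range (n+1), (2*(k:ℝ)+1) = ((n:ℝ)+1)^2 := by
  induction n with
  | zero => simp
  | succ n ih =>
    rw [Finset.sum_range_succ, ih]
    push_cast
    ring

lemma key_ineq {n : ℕ} {p : ℝ[X]} (hp : p.natDegree ≤ n) {x : ℝ}
    (hx : x ∈ Set.Icc (-1:ℝ) 1) :
    (p.eval x)^2 ≤ ((n:ℝ)+1)^2/2 * Pint (p * p) := by
  obtain ⟨c, hc⟩ := exists_expansion n p hp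
  have hnorm : Pint (p*p) = ∑ k ∈ range (n+1), (c k)^2 * (2 / (2*(k:ℝ)+1)) := by
    rw [hc]; exact Pint_sq_expansion n c
  have heval : p.eval x = ∑ k ∈ range (n+1), c k * (leg k).eval x := by
    rw [hc]
    simp [eval_finset_sum]
  set f : ℕ → ℝ := fun k => c k * Real.sqrt (2 / (2*(k:ℝ)+1)) with hf
  set g : ℕ → ℝ := fun k => (leg k).eval x / Real.sqrt (2 / (2*(k:ℝ)+1)) with hg
  have hpos : ∀ k : ℕ, (0:ℝ) < 2 / (2*(k:ℝ)+1) := by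
    intro k
    have : (0:ℝ) < 2*(k:ℝ)+1 := by positivity
    positivity
  have hsqrtpos : ∀ k : ℕ, 0 < Real.sqrt (2 / (2*(k:ℝ)+1)) :=
    fun k => Real.sqrt_pos.mpr (hpos k)
  have hfg : ∀ k, f k * g k = c k * (leg k).eval x := by
    intro k
    rw [hf, hg]
    field_simp
  have hCS := Finset.sum_mul_sq_le_sq_mul_sq (range (n+1)) f g
  have hf2 : ∀ k, (f k)^2 = (c k)^2 * (2 / (2*(k:ℝ)+1)) := by
    intro k
    rw [hf, mul_pow, Real.sq_sqrt (hpos k).le]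
  have hg2 : ∀ k ∈ range (n+1), (g k)^2 ≤ (2*(k:ℝ)+1)/2 := by
    intro k _
    rw [hg, div_pow, Real.sq_sqrt (hpos k).le]
    have h1 := leg_sq_le k hx
    rw [div_le_iff₀ (hpos k)]
    calc ((leg k).eval x)^2 ≤ 1 := h1
      _ = (2*(k:ℝ)+1)/2 * (2 / (2*(k:ℝ)+1)) := by
          field_simp
  have hsum_g : ∑ k ∈ range (n+1), (g k)^2 ≤ ((n:ℝ)+1)^2/2 := by
    calc ∑ k ∈ range (n+1), (g k)^2 ≤ ∑ k ∈ range (n+1), (2*(k:ℝ)+1)/2 :=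
          Finset.sum_le_sum hg2
      _ = (∑ k ∈ range (n+1), (2*(k:ℝ)+1))/2 := by rw [Finset.sum_div]
      _ = ((n:ℝ)+1)^2/2 := by rw [sum_odds]
  have hsum_f : ∑ k ∈ range (n+1), (f k)^2 = Pint (p*p) := by
    rw [hnorm]
    exact Finset.sum_congr rfl fun k _ => hf2 k
  have hfg_sum : ∑ k ∈ range (n+1), f k * g k = p.eval x := by
    rw [heval]
    exact Finset.sum_congr rfl fun k _ => hfg k
  rw [hfg_sum, hsum_f] at hCS
  have hPnonneg : 0 ≤ Pint (p*p) := by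
    rw [← hsum_f]
    exact Finset.sum_nonneg fun k _ => sq_nonneg _
  calc (p.eval x)^2 ≤ Pint (p*p) * ∑ k ∈ range (n+1), (g k)^2 := hCS
    _ ≤ Pint (p*p) * (((n:ℝ)+1)^2/2) := by
        exact mul_le_mul_of_nonneg_left hsum_g hPnonneg
    _ = ((n:ℝ)+1)^2/2 * Pint (p*p) := by ring

/-- the extremal polynomial -/
def Kex (n : ℕ) : ℝ[X] := ∑ k ∈ range (n+1), C ((2*(k:ℝ)+1)/2) * leg k

lemma Kex_eval_one (n : ℕ) : (Kex n).eval 1 = ((n:ℝ)+1)^2/2 := by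
  unfold Kex
  rw [eval_finset_sum]
  simp only [eval_mul, eval_C, leg_eval_one, mul_one]
  rw [← Finset.sum_div, sum_odds]

lemma Kex_norm (n : ℕ) : Pint (Kex n * Kex n) = ((n:ℝ)+1)^2/2 := by
  unfold Kex
  rw [Pint_sq_expansion]
  have h : ∀ k ∈ range (n+1), ((2*(k:ℝ)+1)/2)^2 * (2 / (2*(k:ℝ)+1)) = (2*(k:ℝ)+1)/2 := by
    intro k _
    have : (0:ℝ) < 2*(k:ℝ)+1 := by positivity
    field_simp
  rw [Finset.sum_congr rfl h, ← Finset.sum_div, sum_odds]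

lemma Kex_natDegree_le (n : ℕ) : (Kex n).natDegree ≤ n := by
  unfold Kex
  refine natDegree_sum_le_of_forall_le _ _ fun k hk => ?_
  refine le_trans (natDegree_C_mul_le _ _) (le_trans (leg_natDegree_le k) ?_)
  exact Nat.lt_succ_iff.mp (Finset.mem_range.mp hk)

lemma Kex_ne_zero (n : ℕ) : Kex n ≠ 0 := by
  intro h
  have h1 := Kex_eval_one n
  rw [h] at h1
  simp at h1
  have h2 : (0:ℝ) < ((n:ℝ)+1)^2/2 := by positivity
  linarith




/-- real part polynomial -/
def reP (P : ℂ[X]) : ℝ[X] := ∑ j ∈ P.support, C ((P.coeff j).re) * X^j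
/-- imaginary part polynomial -/
def imP (P : ℂ[X]) : ℝ[X] := ∑ j ∈ P.support, C ((P.coeff j).im) * X^j

lemma reP_coeff (P : ℂ[X]) (m : ℕ) : (reP P).coeff m = (P.coeff m).re := by
  unfold reP
  rw [finset_sum_coeff]
  simp only [coeff_C_mul, coeff_X_pow, mul_ite, mul_one, mul_zero]
  rw [Finset.sum_ite_eq P.support m (fun j => (P.coeff j).re)]
  by_cases h : m ∈ P.support
  · rw [if_pos h]
  · rw [if_neg h]
    rw [notMem_support_iff] at h
    rw [h]
    simp

lemma imP_coeff (P : ℂ[X]) (m : ℕ) : (imP P).coeff m = (P.coeff m).im := by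
  unfold imP
  rw [finset_sum_coeff]
  simp only [coeff_C_mul, coeff_X_pow, mul_ite, mul_one, mul_zero]
  rw [Finset.sum_ite_eq P.support m (fun j => (P.coeff j).im)]
  by_cases h : m ∈ P.support
  · rw [if_pos h]
  · rw [if_neg h]
    rw [notMem_support_iff] at h
    rw [h]
    simp

lemma reP_natDegree_le (P : ℂ[X]) : (reP P).natDegree ≤ P.natDegree := by
  rw [natDegree_le_iff_coeff_eq_zero]
  intro N hN
  rw [reP_coeff, coeff_eq_zero_of_natDegree_lt hN]
  simp

lemma imP_natDegree_le (P : ℂ[X]) : (imP P).natDegree ≤ P.natDegree := by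
  rw [natDegree_le_iff_coeff_eq_zero]
  intro N hN
  rw [imP_coeff, coeff_eq_zero_of_natDegree_lt hN]
  simp

lemma reP_eval (P : ℂ[X]) (x : ℝ) : (reP P).eval x = (P.eval (x:ℂ)).re := by
  conv_rhs => rw [P.as_sum_support_C_mul_X_pow]
  rw [eval_finset_sum, Complex.re_sum]
  unfold reP
  rw [eval_finset_sum]
  refine Finset.sum_congr rfl fun j _ => ?_
  simp only [eval_mul, eval_C, eval_pow, eval_X, Complex.mul_re, ← Complex.ofReal_pow,
    Complex.ofReal_re, Complex.ofReal_im]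
  ring

lemma imP_eval (P : ℂ[X]) (x : ℝ) : (imP P).eval x = (P.eval (x:ℂ)).im := by
  conv_rhs => rw [P.as_sum_support_C_mul_X_pow]
  rw [eval_finset_sum, Complex.im_sum]
  unfold imP
  rw [eval_finset_sum]
  refine Finset.sum_congr rfl fun j _ => ?_
  simp only [eval_mul, eval_C, eval_pow, eval_X, Complex.mul_im, ← Complex.ofReal_pow,
    Complex.ofReal_re, Complex.ofReal_im]
  ring

lemma abs_sq_eval (P : ℂ[X]) (x : ℝ) :
    ‖P.eval (x:ℂ)‖^2 = ((reP P).eval x)^2 + ((imP P).eval x)^2 := by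
  rw [Complex.sq_norm, Complex.normSq_apply, reP_eval, imP_eval]
  ring

lemma set_integral_eq (P : ℂ[X]) :
    (∫ u in Set.Icc (-1:ℝ) 1, ‖P.eval (u:ℂ)‖^2)
      = Pint (reP P * reP P) + Pint (imP P * imP P) := by
  have h1 : (∫ u in Set.Icc (-1:ℝ) 1, ‖P.eval (u:ℂ)‖^2)
      = ∫ u in (-1:ℝ)..1, ‖P.eval (u:ℂ)‖^2 := by
    rw [intervalIntegral.integral_of_le (by norm_num : (-1:ℝ) ≤ 1),
      MeasureTheory.integral_Icc_eq_integral_Ioc]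
  rw [h1]
  have h2 : ∀ u : ℝ, ‖P.eval (u:ℂ)‖^2
      = (reP P * reP P).eval u + (imP P * imP P).eval u := by
    intro u
    rw [abs_sq_eval]
    simp only [eval_mul]
    ring
  rw [intervalIntegral.integral_congr (fun u _ => h2 u)]
  unfold Pint
  rw [intervalIntegral.integral_add
    (((reP P * reP P).continuous).intervalIntegrable _ _)
    (((imP P * imP P).continuous).intervalIntegrable _ _)]

lemma set_integral_pos {P : ℂ[X]} (hP : P ≠ 0) :
    0 < ∫ u in Set.Icc (-1:ℝ) 1, ‖P.eval (u:ℂ)‖^2 := by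
  set f : ℝ → ℝ := fun u => ‖P.eval (u:ℂ)‖^2 with hf
  have hcont : Continuous f := by
    refine Continuous.pow ?_ 2
    exact continuous_norm.comp ((P.continuous_aeval).comp Complex.continuous_ofReal)
  have hnonneg : (0:ℝ→ℝ) ≤ f := fun u => by positivity
  -- find a point in Ioo where P doesn't vanish
  have hroots : {x : ℝ | P.eval (x:ℂ) = 0}.Finite := by
    have hfin : {z : ℂ | P.IsRoot z}.Finite := by
      refine Set.Finite.subset (P.roots.toFinset : Finset ℂ).finite_toSet ?_
      intro z hz
      simp only [Finset.coe_sort_coe, Finset.mem_coe, Multiset.mem_toFinset]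
      rw [mem_roots hP]
      exact hz
    have hinj : Function.Injective (fun x : ℝ => (x:ℂ)) := Complex.ofReal_injective
    exact Set.Finite.preimage hinj.injOn hfin
  have hIoo : (Set.Ioo (-1:ℝ) 1).Infinite := Set.Ioo_infinite (by norm_num)
  obtain ⟨x₀, hx₀⟩ := (hIoo.diff hroots).nonempty
  have hx₀Ioo : x₀ ∈ Set.Ioo (-1:ℝ) 1 := hx₀.1
  have hx₀ne : f x₀ ≠ 0 := by
    simp only [hf]
    intro h
    apply hx₀.2
    have : ‖P.eval (x₀:ℂ)‖ = 0 := by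
      nlinarith [norm_nonneg (P.eval (x₀:ℂ))]
    simpa using this
  have h1 : (∫ u in Set.Icc (-1:ℝ) 1, f u) = ∫ u in (-1:ℝ)..1, f u := by
    rw [intervalIntegral.integral_of_le (by norm_num : (-1:ℝ) ≤ 1),
      MeasureTheory.integral_Icc_eq_integral_Ioc]
  rw [h1]
  rw [intervalIntegral.integral_pos_iff_support_of_nonneg_ae
    (Filter.Eventually.of_forall hnonneg) (hcont.intervalIntegrable _ _)]
  refine ⟨by norm_num, ?_⟩
  have hopen : IsOpen (Function.support f) := hcont.isOpen_support
  have hsub : (Function.support f ∩ Set.Ioo (-1:ℝ) 1) ⊆ Function.support f ∩ Set.Ioc (-1:ℝ) 1 :=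
    Set.inter_subset_inter_right _ Set.Ioo_subset_Ioc_self
  refine lt_of_lt_of_le ?_ (measure_mono hsub)
  refine IsOpen.measure_pos volume (hopen.inter isOpen_Ioo) ⟨x₀, hx₀ne, hx₀Ioo⟩





lemma complex_key {n : ℕ} {P : ℂ[X]} (hP : P.natDegree ≤ n) {x : ℝ}
    (hx : x ∈ Set.Icc (-1:ℝ) 1) :
    ‖P.eval (x:ℂ)‖^2
      ≤ ((n:ℝ)+1)^2/2 * ∫ u in Set.Icc (-1:ℝ) 1, ‖P.eval (u:ℂ)‖^2 := by
  rw [abs_sq_eval, set_integral_eq, mul_add]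
  have h1 := key_ineq (le_trans (reP_natDegree_le P) hP) hx
  have h2 := key_ineq (le_trans (imP_natDegree_le P) hP) hx
  linarith

lemma sqrt_const (n : ℕ) : Real.sqrt (((n:ℝ)+1)^2/2) = ((n:ℝ)+1)/Real.sqrt 2 := by
  rw [show ((n:ℝ)+1)^2/2 = (((n:ℝ)+1)/Real.sqrt 2)^2 by
    rw [div_pow, Real.sq_sqrt (by norm_num : (0:ℝ) ≤ 2)]]
  exact Real.sqrt_sq (by positivity)


end

end Stmt11Proof

open Stmt11Proof in
theorem stmt11 (n : ℕ) :
    (⨆ P : {P : Polynomial ℂ // P ≠ 0 ∧ P.natDegree ≤ n},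
        (⨆ u : Set.Icc (-1:ℝ) 1, ‖P.1.eval ((u:ℝ):ℂ)‖) /
          (∫ u in Set.Icc (-1:ℝ) 1, ‖P.1.eval (u:ℂ)‖ ^ 2) ^ ((1:ℝ)/2)) =
      (n + 1) / Real.sqrt 2 := by
  classical
  haveI hIccNe : Nonempty (Set.Icc (-1:ℝ) 1) := ⟨⟨0, by norm_num⟩⟩
  haveI hTNe : Nonempty {P : Polynomial ℂ // P ≠ 0 ∧ P.natDegree ≤ n} :=
    ⟨⟨C 1, by simp, by simp⟩⟩
  have hs2 : Real.sqrt 2 * Real.sqrt 2 = 2 := Real.mul_self_sqrt (by norm_num)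
  have hs2pos : 0 < Real.sqrt 2 := Real.sqrt_pos.mpr (by norm_num)
  set S : ℝ := ((n:ℝ)+1)/Real.sqrt 2 with hS
  have hSpos : 0 < S := by rw [hS]; positivity
  have main : ∀ P : {P : Polynomial ℂ // P ≠ 0 ∧ P.natDegree ≤ n},
      (⨆ u : Set.Icc (-1:ℝ) 1, ‖P.1.eval ((u:ℝ):ℂ)‖) /
        (∫ u in Set.Icc (-1:ℝ) 1, ‖P.1.eval (u:ℂ)‖ ^ 2) ^ ((1:ℝ)/2) ≤ S := by
    rintro ⟨P, hP0, hPdeg⟩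
    dsimp only
    set I : ℝ := ∫ u in Set.Icc (-1:ℝ) 1, ‖P.eval (u:ℂ)‖ ^ 2 with hI
    have hIpos : 0 < I := set_integral_pos hP0
    have hD : I ^ ((1:ℝ)/2) = Real.sqrt I := (Real.sqrt_eq_rpow I).symm
    have hDpos : 0 < I ^ ((1:ℝ)/2) := by
      rw [hD]; exact Real.sqrt_pos.mpr hIpos
    have hub : ∀ u : Set.Icc (-1:ℝ) 1,
        ‖P.eval ((u:ℝ):ℂ)‖ ≤ S * I ^ ((1:ℝ)/2) := by
      intro u
      have hkey := complex_key hPdeg u.2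
      rw [← hI] at hkey
      have h2 : ‖P.eval ((u:ℝ):ℂ)‖ ≤ Real.sqrt (((n:ℝ)+1)^2/2 * I) := by
        rw [← Real.sqrt_sq (norm_nonneg (P.eval ((u:ℝ):ℂ)))]
        exact Real.sqrt_le_sqrt hkey
      rw [Real.sqrt_mul (by positivity) I, sqrt_const] at h2
      rw [hD, hS]
      exact h2
    have hsup : (⨆ u : Set.Icc (-1:ℝ) 1, ‖P.eval ((u:ℝ):ℂ)‖) ≤ S * I ^ ((1:ℝ)/2) :=
      ciSup_le hub
    rw [div_le_iff₀ hDpos]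
    exact hsup
  refine le_antisymm (ciSup_le main) ?_
  -- lower bound via the extremal polynomial
  set P₀ : ℂ[X] := (Kex n).map (algebraMap ℝ ℂ) with hP₀def
  have hmapev : ∀ x : ℝ, P₀.eval ((x:ℝ):ℂ) = (((Kex n).eval x : ℝ) : ℂ) := by
    intro x
    rw [hP₀def, eval_map]
    have h1 : ((x:ℝ):ℂ) = algebraMap ℝ ℂ x := rfl
    rw [h1, eval₂_at_apply]
    rfl
  have hP₀ne : P₀ ≠ 0 := by
    rw [hP₀def, Ne, Polynomial.map_eq_zero_iff (algebraMap ℝ ℂ).injective]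
    exact Kex_ne_zero n
  have hP₀deg : P₀.natDegree ≤ n := le_trans (natDegree_map_le) (Kex_natDegree_le n)
  set M : ℝ := ((n:ℝ)+1)^2/2 with hM
  have hMpos : 0 < M := by rw [hM]; positivity
  have hIeq : (∫ u in Set.Icc (-1:ℝ) 1, ‖P₀.eval (u:ℂ)‖ ^ 2) = M := by
    have hcong : Set.EqOn (fun u : ℝ => ‖P₀.eval (u:ℂ)‖ ^ 2)
        (fun u : ℝ => (Kex n * Kex n).eval u) (Set.Icc (-1:ℝ) 1) := by
      intro u _
      simp only
      rw [hmapev u, Complex.norm_real, Real.norm_eq_abs, eval_mul, sq_abs]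
      ring
    rw [MeasureTheory.setIntegral_congr_fun measurableSet_Icc hcong]
    have h2 : (∫ u in Set.Icc (-1:ℝ) 1, (Kex n * Kex n).eval u) = Pint (Kex n * Kex n) := by
      unfold Pint
      rw [intervalIntegral.integral_of_le (by norm_num : (-1:ℝ) ≤ 1),
        MeasureTheory.integral_Icc_eq_integral_Ioc]
    rw [h2, Kex_norm, hM]
  have hNle : ∀ u : Set.Icc (-1:ℝ) 1, ‖P₀.eval ((u:ℝ):ℂ)‖ ≤ M := by
    intro u
    have hk := key_ineq (Kex_natDegree_le n) u.2
    rw [Kex_norm] at hk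
    rw [← hM] at hk
    have habs0 : ‖P₀.eval ((u:ℝ):ℂ)‖ = |(Kex n).eval (u:ℝ)| := by
      rw [hmapev (u:ℝ), Complex.norm_real, Real.norm_eq_abs]
    rw [habs0]
    nlinarith [abs_nonneg ((Kex n).eval (u:ℝ)), sq_abs ((Kex n).eval (u:ℝ)), hMpos]
  have hNsup : (⨆ u : Set.Icc (-1:ℝ) 1, ‖P₀.eval ((u:ℝ):ℂ)‖) = M := by
    refine le_antisymm (ciSup_le hNle) ?_
    have hb : BddAbove (Set.range fun u : Set.Icc (-1:ℝ) 1 =>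
        ‖P₀.eval ((u:ℝ):ℂ)‖) := by
      refine ⟨M, ?_⟩
      rintro _ ⟨u, rfl⟩
      exact hNle u
    have h1 := le_ciSup hb (⟨1, by norm_num⟩ : Set.Icc (-1:ℝ) 1)
    have h2 : ‖P₀.eval (((⟨1, by norm_num⟩ : Set.Icc (-1:ℝ) 1):ℝ):ℂ)‖ = M := by
      have hco : ((⟨1, by norm_num⟩ : Set.Icc (-1:ℝ) 1):ℝ) = (1:ℝ) := rfl
      rw [hco, hmapev 1, Complex.norm_real, Real.norm_eq_abs, Kex_eval_one, ← hM, abs_of_pos hMpos]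
    rw [h2] at h1
    exact h1
  have hbdd : BddAbove (Set.range fun P : {P : Polynomial ℂ // P ≠ 0 ∧ P.natDegree ≤ n} =>
      (⨆ u : Set.Icc (-1:ℝ) 1, ‖P.1.eval ((u:ℝ):ℂ)‖) /
        (∫ u in Set.Icc (-1:ℝ) 1, ‖P.1.eval (u:ℂ)‖ ^ 2) ^ ((1:ℝ)/2)) := by
    refine ⟨S, ?_⟩
    rintro _ ⟨P, rfl⟩
    exact main P
  have hfinal := le_ciSup hbdd (⟨P₀, hP₀ne, hP₀deg⟩ :
    {P : Polynomial ℂ // P ≠ 0 ∧ P.natDegree ≤ n})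
  have hratio : (⨆ u : Set.Icc (-1:ℝ) 1, ‖P₀.eval ((u:ℝ):ℂ)‖) /
      (∫ u in Set.Icc (-1:ℝ) 1, ‖P₀.eval (u:ℂ)‖ ^ 2) ^ ((1:ℝ)/2) = S := by
    rw [hNsup, hIeq, ← Real.sqrt_eq_rpow, hM, sqrt_const, hS]
    have hn1 : (0:ℝ) < (n:ℝ)+1 := by positivity
    field_simp
    linear_combination hs2
  rw [hratio] at hfinal
  exact hfinal
end

section
/- For n ∈ ℤ₊, sup over nonzero polynomials P of degree at most n of ‖P‖_{L_∞([-1,1])} / (∫_{-1}^1 |P(u)|² (1-u²)^{-1/2} du)^{1/2} = ((2n+1)/π)^{1/2}. -/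
/-!
The weighted integral is the squared `L²` norm for the Chebyshev measure `measureT`, in which
the Chebyshev polynomials `T_k` are orthogonal with `‖T_0‖² = π` and `‖T_k‖² = π / 2`.
Expanding `P = ∑_{k ≤ n} c_k T_k` and using `|T_k| ≤ 1` on `[-1, 1]`, the sup norm is at most
`∑ |c_k|`, and Cauchy–Schwarz bounds this by `(∑ ‖T_k‖⁻²)^{1/2} ‖P‖ = ((2n + 1) / π)^{1/2} ‖P‖`.
Equality holds throughout for `c_k = π / ‖T_k‖²`, attaining the sup norm at `u = 1`.
-/

open MeasureTheory Polynomial Polynomial.Chebyshev Real Finset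

theorem setIntegral_Icc_mul_rpow_eq_integral_measureT (f : ℝ → ℝ) :
    ∫ u in Set.Icc (-1:ℝ) 1, f u * (1 - u ^ 2) ^ (-(1:ℝ) / 2) = ∫ x, f x ∂measureT := by
  rw [integral_measureT, intervalIntegral.integral_of_le (by norm_num),
    integral_Icc_eq_integral_Ioc]
  refine setIntegral_congr_fun measurableSet_Ioc fun u hu => ?_
  have h : 0 ≤ 1 - u ^ 2 := by nlinarith [hu.1, hu.2]
  rw [neg_div, rpow_neg h, ← sqrt_eq_rpow, sqrt_inv]

theorem exists_eq_sum_smul_T {R : Type*} [Field R] [NeZero (2 : R)] {n : ℕ} {P : R[X]}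
    (hP : P.natDegree ≤ n) : ∃ c : ℕ → R, ∑ k ∈ range (n + 1), c k • T R k = P := by
  have hmem : P ∈ degreeLT R (n + 1) := by
    rw [mem_degreeLT]
    exact (degree_le_natDegree.trans (WithBot.coe_le_coe.mpr hP)).trans_lt
      (WithBot.coe_lt_coe.mpr n.lt_succ_self)
  rwa [← Sequence.span_degreeLT (chebyshevTsequence R) (by simp),
    show Set.Iio (n + 1) = (range (n + 1) : Set ℕ) by simp,
    Submodule.mem_span_image_finset_iff_exists_fun'] at hmem

theorem eval_ofReal_sum_smul_T (s : Finset ℕ) (c : ℕ → ℂ) (x : ℝ) :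
    (∑ k ∈ s, c k • T ℂ k).eval (x : ℂ) = ∑ k ∈ s, c k * (T ℝ k).eval x := by
  simp only [eval_finsetSum, eval_smul, smul_eq_mul, complex_ofReal_eval_T]

theorem norm_sum_mul_eval_T_real_le {x : ℝ} (hx : x ∈ Set.Icc (-1) 1) (s : Finset ℕ)
    (c : ℕ → ℂ) : ‖∑ k ∈ s, c k * (T ℝ k).eval x‖ ≤ ∑ k ∈ s, ‖c k‖ := by
  refine (norm_sum_le _ _).trans (sum_le_sum fun k _ => ?_)
  rw [norm_mul, Complex.norm_real, norm_eq_abs]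
  exact mul_le_of_le_one_right (norm_nonneg _) (abs_le.mpr (eval_T_real_mem_Icc k hx))

noncomputable def normSqT (k : ℕ) : ℝ := if k = 0 then π else π / 2

theorem normSqT_pos (k : ℕ) : 0 < normSqT k := by
  unfold normSqT; split_ifs <;> positivity

theorem integral_eval_T_real_mul_eval_T_real_measureT_eq (j k : ℕ) :
    ∫ x, (T ℝ j).eval x * (T ℝ k).eval x ∂measureT = if j = k then normSqT k else 0 := by
  split_ifs with hjk
  · subst hjk
    unfold normSqT
    split_ifs with hj
    · subst hj; exact integral_eval_T_real_mul_self_measureT_zero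
    · exact integral_T_real_mul_self_measureT_of_ne_zero hj
  · exact integral_eval_T_real_mul_eval_T_real_measureT_of_ne hjk

theorem integral_sum_mul_eval_T_real_sq_measureT (s : Finset ℕ) (a : ℕ → ℝ) :
    ∫ x, (∑ k ∈ s, a k * (T ℝ k).eval x) ^ 2 ∂measureT = ∑ k ∈ s, a k ^ 2 * normSqT k := by
  have hexpand : ∀ x, (∑ k ∈ s, a k * (T ℝ k).eval x) ^ 2 =
      ∑ j ∈ s, ∑ k ∈ s, a j * a k * ((T ℝ j).eval x * (T ℝ k).eval x) := by
    intro x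
    simp_rw [sq, sum_mul_sum, mul_mul_mul_comm]
  have hint : ∀ j k : ℕ, Integrable (fun x => a j * a k * ((T ℝ j).eval x * (T ℝ k).eval x))
      measureT := fun j k => integrable_measureT (by fun_prop)
  simp_rw [hexpand]
  rw [integral_finsetSum _ fun j _ => integrable_finsetSum _ fun k _ => hint j k]
  refine sum_congr rfl fun j hj => ?_
  rw [integral_finsetSum _ fun k _ => hint j k]
  simp_rw [integral_const_mul, integral_eval_T_real_mul_eval_T_real_measureT_eq, mul_ite,
    mul_zero, sum_ite_eq, if_pos hj, sq]

theorem integral_norm_sum_mul_eval_T_real_sq_measureT (s : Finset ℕ) (c : ℕ → ℂ) :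
    ∫ x, ‖∑ k ∈ s, c k * (T ℝ k).eval x‖ ^ 2 ∂measureT = ∑ k ∈ s, ‖c k‖ ^ 2 * normSqT k := by
  have hsplit : ∀ x : ℝ, ‖∑ k ∈ s, c k * (T ℝ k).eval x‖ ^ 2 =
      (∑ k ∈ s, (c k).re * (T ℝ k).eval x) ^ 2 + (∑ k ∈ s, (c k).im * (T ℝ k).eval x) ^ 2 := by
    intro x
    rw [Complex.sq_norm, Complex.normSq_apply, Complex.re_sum, Complex.im_sum]
    simp only [Complex.re_mul_ofReal, Complex.im_mul_ofReal, sq]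
  simp_rw [hsplit]
  rw [integral_add (integrable_measureT (by fun_prop)) (integrable_measureT (by fun_prop)),
    integral_sum_mul_eval_T_real_sq_measureT, integral_sum_mul_eval_T_real_sq_measureT,
    ← sum_add_distrib]
  simp_rw [← add_mul, Complex.sq_norm, Complex.normSq_apply, sq]

theorem sum_range_inv_normSqT (n : ℕ) :
    ∑ k ∈ range (n + 1), (normSqT k)⁻¹ = (2 * n + 1) / π := by
  rw [sum_range_succ']
  simp only [normSqT, Nat.succ_ne_zero, if_false, if_true, sum_const, card_range, nsmul_eq_mul]
  field_simp

theorem sum_range_pi_div_normSqT (n : ℕ) :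
    ∑ k ∈ range (n + 1), π / normSqT k = 2 * n + 1 := by
  simp_rw [div_eq_mul_inv, ← mul_sum, sum_range_inv_normSqT]
  field_simp

theorem sq_sum_norm_le (n : ℕ) (c : ℕ → ℂ) :
    (∑ k ∈ range (n + 1), ‖c k‖) ^ 2 ≤
      (2 * n + 1) / π * ∑ k ∈ range (n + 1), ‖c k‖ ^ 2 * normSqT k := by
  rw [← sum_range_inv_normSqT]
  refine sum_sq_le_sum_mul_sum_of_sq_le_mul _ (fun k _ => (inv_pos.mpr (normSqT_pos k)).le)
    (fun k _ => by have := normSqT_pos k; positivity) fun k _ => le_of_eq ?_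
  field_simp [(normSqT_pos k).ne']

noncomputable def supNormIcc (P : ℂ[X]) : ℝ := ⨆ u : Set.Icc (-1:ℝ) 1, ‖P.eval ((u:ℝ):ℂ)‖

noncomputable def chebyshevNormSq (P : ℂ[X]) : ℝ :=
  ∫ u in Set.Icc (-1:ℝ) 1, ‖P.eval (u:ℂ)‖ ^ 2 * (1 - u^2) ^ (-(1:ℝ)/2)

theorem le_supNormIcc (P : ℂ[X]) {u : ℝ} (hu : u ∈ Set.Icc (-1) 1) :
    ‖P.eval (u:ℂ)‖ ≤ supNormIcc P := by
  have hcont : Continuous fun u : Set.Icc (-1:ℝ) 1 => ‖P.eval ((u:ℝ):ℂ)‖ := by fun_prop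
  exact le_ciSup (isCompact_range hcont).bddAbove ⟨u, hu⟩

theorem supNormIcc_sum_smul_T_le (s : Finset ℕ) (c : ℕ → ℂ) :
    supNormIcc (∑ k ∈ s, c k • T ℂ k) ≤ ∑ k ∈ s, ‖c k‖ := by
  have : Nonempty (Set.Icc (-1:ℝ) 1) := ⟨⟨0, by norm_num⟩⟩
  refine ciSup_le fun u => ?_
  rw [eval_ofReal_sum_smul_T]
  exact norm_sum_mul_eval_T_real_le u.2 s c

theorem chebyshevNormSq_sum_smul_T (s : Finset ℕ) (c : ℕ → ℂ) :
    chebyshevNormSq (∑ k ∈ s, c k • T ℂ k) = ∑ k ∈ s, ‖c k‖ ^ 2 * normSqT k := by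
  rw [chebyshevNormSq, setIntegral_Icc_mul_rpow_eq_integral_measureT (fun u => ‖_‖ ^ 2)]
  simp_rw [eval_ofReal_sum_smul_T]
  exact integral_norm_sum_mul_eval_T_real_sq_measureT s c

theorem supNormIcc_le_sqrt_mul_sqrt_chebyshevNormSq {n : ℕ} {P : ℂ[X]} (hP : P.natDegree ≤ n) :
    supNormIcc P ≤ √((2 * n + 1) / π) * √(chebyshevNormSq P) := by
  obtain ⟨c, rfl⟩ := exists_eq_sum_smul_T hP
  rw [← sqrt_mul (by positivity), chebyshevNormSq_sum_smul_T]
  calc supNormIcc (∑ k ∈ range (n + 1), c k • T ℂ k)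
      ≤ ∑ k ∈ range (n + 1), ‖c k‖ := supNormIcc_sum_smul_T_le _ c
    _ ≤ _ := le_sqrt_of_sq_le (sq_sum_norm_le n c)

theorem supNormIcc_div_sqrt_chebyshevNormSq_le {n : ℕ} {P : ℂ[X]} (hP : P.natDegree ≤ n) :
    supNormIcc P / √(chebyshevNormSq P) ≤ √((2 * n + 1) / π) :=
  div_le_of_le_mul₀ (sqrt_nonneg _) (sqrt_nonneg _)
    (supNormIcc_le_sqrt_mul_sqrt_chebyshevNormSq hP)

noncomputable def extremalPoly (n : ℕ) : ℂ[X] :=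
  ∑ k ∈ range (n + 1), ((π / normSqT k : ℝ) : ℂ) • T ℂ k

theorem natDegree_extremalPoly_le (n : ℕ) : (extremalPoly n).natDegree ≤ n :=
  natDegree_sum_le_of_forall_le _ _ fun k hk =>
    (natDegree_smul_le _ _).trans (by rw [natDegree_T]; simpa using mem_range_succ_iff.mp hk)

theorem eval_one_extremalPoly (n : ℕ) : (extremalPoly n).eval 1 = ((2 * n + 1 : ℝ) : ℂ) := by
  have h := eval_ofReal_sum_smul_T (range (n + 1)) (fun k => ((π / normSqT k : ℝ) : ℂ)) 1
  simp only [Complex.ofReal_one, T_eval_one, mul_one] at h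
  rw [extremalPoly, h, ← Complex.ofReal_sum, sum_range_pi_div_normSqT]

theorem extremalPoly_ne_zero (n : ℕ) : extremalPoly n ≠ 0 := fun h => by
  have := eval_one_extremalPoly n
  rw [h, eval_zero, eq_comm, Complex.ofReal_eq_zero] at this
  linarith

theorem supNormIcc_extremalPoly (n : ℕ) : supNormIcc (extremalPoly n) = 2 * n + 1 := by
  refine le_antisymm ((supNormIcc_sum_smul_T_le _ _).trans_eq ?_) ?_
  · simp_rw [Complex.norm_real, norm_eq_abs, abs_of_pos (div_pos pi_pos (normSqT_pos _))]
    exact sum_range_pi_div_normSqT n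
  · have h := le_supNormIcc (extremalPoly n) (u := 1) (by norm_num)
    rwa [Complex.ofReal_one, eval_one_extremalPoly, Complex.norm_real, norm_eq_abs,
      abs_of_pos (by positivity)] at h

theorem chebyshevNormSq_extremalPoly (n : ℕ) :
    chebyshevNormSq (extremalPoly n) = (2 * n + 1) * π := by
  rw [extremalPoly, chebyshevNormSq_sum_smul_T, ← sum_range_pi_div_normSqT, sum_mul]
  refine sum_congr rfl fun k _ => ?_
  rw [Complex.norm_real, norm_eq_abs, sq_abs]
  field_simp [(normSqT_pos k).ne']

theorem supNormIcc_div_sqrt_chebyshevNormSq_extremalPoly (n : ℕ) :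
    supNormIcc (extremalPoly n) / √(chebyshevNormSq (extremalPoly n)) = √((2 * n + 1) / π) := by
  have hpos : (0:ℝ) < 2 * n + 1 := by positivity
  rw [supNormIcc_extremalPoly, chebyshevNormSq_extremalPoly, div_eq_iff (by positivity),
    ← sqrt_mul (by positivity), show (2 * n + 1) / π * ((2 * n + 1) * π) = (2 * n + 1 : ℝ) ^ 2 by
      field_simp, sqrt_sq hpos.le]

theorem stmt12 (n : ℕ) :
    (⨆ P : {P : Polynomial ℂ // P ≠ 0 ∧ P.natDegree ≤ n},
        (⨆ u : Set.Icc (-1:ℝ) 1, ‖P.1.eval ((u:ℝ):ℂ)‖) /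
          (∫ u in Set.Icc (-1:ℝ) 1,
              ‖P.1.eval (u:ℂ)‖ ^ 2 * (1 - u^2) ^ (-(1:ℝ)/2)) ^ ((1:ℝ)/2)) =
      ((2*n + 1) / Real.pi) ^ ((1:ℝ)/2) := by
  simp_rw [← sqrt_eq_rpow]
  let P₀ : {P : Polynomial ℂ // P ≠ 0 ∧ P.natDegree ≤ n} :=
    ⟨extremalPoly n, extremalPoly_ne_zero n, natDegree_extremalPoly_le n⟩
  have : Nonempty {P : Polynomial ℂ // P ≠ 0 ∧ P.natDegree ≤ n} := ⟨P₀⟩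
  exact ciSup_eq_of_forall_le_of_forall_lt_exists_gt
    (fun P => supNormIcc_div_sqrt_chebyshevNormSq_le P.2.2) fun w hw =>
      ⟨P₀, hw.trans_eq (supNormIcc_div_sqrt_chebyshevNormSq_extremalPoly n).symm⟩
end
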